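/- arXiv:1902.09646 — 2 statements merged into one kernel-verified Lean document; each statement's English description precedes it below -/
import Mathlib

section
/- Let p ∈ ℝ and let r̂ : ℝ → ℝ be measurable with r_min ≤ r̂(v) ≤ r_max for all v. If r_max − r_min ≤ √(2π)·σ_ε·σ/σ_θ, then the expected payoff of adoption v_i ↦ v_i − p + E[r̂ ∥ v_i] is a nondecreasing function of v_i on ℝ. -/
noncomputable section

open MeasureTheory Real Set Filter

/-- standard normal pdf φ -/
def stdPdf (x : ℝ) : ℝ := (Real.sqrt (2 * Real.pi))⁻¹ * Real.exp (-(x ^ 2) / 2)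

/-- standard normal cdf Φ -/
def stdCdf (x : ℝ) : ℝ := ∫ t in Set.Iic x, stdPdf t

/-- posterior expected reward  E[r ‖ x] = ∫ r(v) φ((v-μ_x)/σ_v)/σ_v dv, where
    μ_x = τ x + (1-τ) θ, τ = σθ²/(σε²+σθ²), σ_v = σε σθ / √(σε²+σθ²). -/
def postReward (θ σε σθ : ℝ) (r : ℝ → ℝ) (x : ℝ) : ℝ :=
  ∫ v, r v * stdPdf ((v - (σθ ^ 2 / (σε ^ 2 + σθ ^ 2) * x +
      (1 - σθ ^ 2 / (σε ^ 2 + σθ ^ 2)) * θ)) / (σε * σθ / Real.sqrt (σε ^ 2 + σθ ^ 2))) /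
    (σε * σθ / Real.sqrt (σε ^ 2 + σθ ^ 2))

/-- expected profit  Π(p, r, c) = ∫ (p - r(v)) Φ((v-c)/σε) φ((θ-v)/σθ)/σθ dv. -/
def profit (θ σε σθ : ℝ) (p : ℝ) (r : ℝ → ℝ) (c : ℝ) : ℝ :=
  ∫ v, (p - r v) * stdCdf ((v - c) / σε) * stdPdf ((θ - v) / σθ) / σθ

lemma stdPdf_nonneg (x : ℝ) : 0 ≤ stdPdf x := by
  unfold stdPdf
  positivity

lemma stdPdf_le (x : ℝ) : stdPdf x ≤ (Real.sqrt (2 * Real.pi))⁻¹ := by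
  unfold stdPdf
  have h1 : Real.exp (-(x ^ 2) / 2) ≤ 1 := by
    rw [Real.exp_le_one_iff]; nlinarith [sq_nonneg x]
  have h2 : (0:ℝ) ≤ (Real.sqrt (2 * Real.pi))⁻¹ := by positivity
  nlinarith

lemma stdPdf_anti {a b : ℝ} (h : a ^ 2 ≤ b ^ 2) : stdPdf b ≤ stdPdf a := by
  unfold stdPdf
  have h2 : (0:ℝ) ≤ (Real.sqrt (2 * Real.pi))⁻¹ := by positivity
  have := Real.exp_le_exp.2 (show -(b^2)/2 ≤ -(a^2)/2 by linarith)
  nlinarith [Real.exp_pos (-(b^2)/2)]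

lemma gauss_eq (s μ : ℝ) (hs : s ≠ 0) :
    (fun v : ℝ => stdPdf ((v - μ) / s) / s)
      = fun v => ((Real.sqrt (2 * Real.pi))⁻¹ / s) * Real.exp (-(1/(2*s^2)) * (v - μ)^2) := by
  funext v
  unfold stdPdf
  rw [div_pow]
  have : -((v - μ) ^ 2 / s ^ 2) / 2 = -(1/(2*s^2)) * (v - μ)^2 := by
    ring
  rw [this]
  ring

lemma gauss_integrable (s μ : ℝ) (hs : 0 < s) :
    Integrable (fun v : ℝ => stdPdf ((v - μ) / s) / s) := by
  rw [gauss_eq s μ hs.ne']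
  exact (((integrable_exp_neg_mul_sq (show (0:ℝ) < 1/(2*s^2) by positivity)).comp_sub_right
    μ).const_mul _)

lemma arith_helper (S e t u z : ℝ) (hS : S ≠ 0) (he : e ≠ 0) (ht : t ≠ 0) (hu : u ≠ 0)
    (h2 : u ^ 2 = e ^ 2 + t ^ 2) :
    S * e * u / t * (t ^ 2 / (e ^ 2 + t ^ 2) * z * (S⁻¹ / (e * t / u))) = z := by
  have h3 : e ^ 2 + t ^ 2 ≠ 0 := by rw [← h2]; exact pow_ne_zero 2 hu
  field_simp
  linear_combination z * h2

lemma shift_setIntegral (f : ℝ → ℝ) (μ m : ℝ) :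
    ∫ v in Iic m, f (v - μ) = ∫ u in Iic (m - μ), f u := by
  rw [← integral_indicator measurableSet_Iic, ← integral_indicator measurableSet_Iic]
  have h : (Iic m).indicator (fun v => f (v - μ))
      = fun v => (Iic (m - μ)).indicator f (v - μ) := by
    funext v
    by_cases hv : v ≤ m
    · simp [indicator, mem_Iic, hv, sub_le_sub_iff_right]
    · simp [indicator, mem_Iic, hv, sub_le_sub_iff_right]
  rw [h, integral_sub_right_eq_self (fun v => (Iic (m - μ)).indicator f v) μ]

set_option maxHeartbeats 2000000 in
/-- if the spread of the reward is at most √(2π)·σε·σ/σθ, the expected payoff of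
    adoption is nondecreasing in the private valuation. -/
theorem stmt_2 (θ σε σθ : ℝ) (hσε : 0 < σε) (hσθ : 0 < σθ)
    (p : ℝ) (r : ℝ → ℝ) (hmeas : Measurable r)
    (rmin rmax : ℝ) (hrange : ∀ v, rmin ≤ r v ∧ r v ≤ rmax)
    (hspread : rmax - rmin ≤
      Real.sqrt (2 * Real.pi) * σε * Real.sqrt (σε ^ 2 + σθ ^ 2) / σθ) :
    Monotone (fun vi : ℝ => vi - p + postReward θ σε σθ r vi) := by
  have hSum : (0:ℝ) < σε ^ 2 + σθ ^ 2 := by positivity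
  set σs : ℝ := Real.sqrt (σε ^ 2 + σθ ^ 2) with hσs
  have hσs0 : 0 < σs := Real.sqrt_pos.2 hSum
  have hσs2 : σs ^ 2 = σε ^ 2 + σθ ^ 2 := Real.sq_sqrt hSum.le
  set s : ℝ := σε * σθ / σs with hsdef
  have hs0 : 0 < s := by positivity
  set τ : ℝ := σθ ^ 2 / (σε ^ 2 + σθ ^ 2) with hτ
  have hτ0 : 0 < τ := by positivity
  set C : ℝ := (Real.sqrt (2 * Real.pi))⁻¹ / s with hC
  have hC0 : 0 ≤ C := by positivity
  set g : ℝ → ℝ := fun t => stdPdf (t / s) / s with hg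
  have hgint : ∀ μ : ℝ, Integrable (fun v => g (v - μ)) := fun μ => gauss_integrable s μ hs0
  have hgI : Integrable g := by simpa using gauss_integrable s 0 hs0
  have hgle : ∀ t, g t ≤ C := fun t => by
    rw [hg, hC]
    exact div_le_div_of_nonneg_right (stdPdf_le _) hs0.le
  have hganti : ∀ a b : ℝ, a ^ 2 ≤ b ^ 2 → g b ≤ g a := by
    intro a b hab
    rw [hg]
    refine div_le_div_of_nonneg_right (stdPdf_anti ?_) hs0.le
    have h1 : (a / s) ^ 2 = a ^ 2 / s ^ 2 := div_pow a s 2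
    have h2 : (b / s) ^ 2 = b ^ 2 / s ^ 2 := div_pow b s 2
    rw [h1, h2]
    exact div_le_div_of_nonneg_right hab (by positivity)
  have hPR : ∀ z : ℝ, postReward θ σε σθ r z
      = ∫ v, r v * g (v - (τ * z + (1 - τ) * θ)) := by
    intro z
    unfold postReward
    simp only [hg, hsdef, hσs, hτ, mul_div_assoc]
  have hrint : ∀ μ : ℝ, Integrable (fun v => r v * g (v - μ)) := fun μ => by
    refine (hgint μ).bdd_mul hmeas.aestronglyMeasurable (c := |rmin| + |rmax|) (Filter.Eventually.of_forall fun v => ?_)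
    rcases hrange v with ⟨h1, h2⟩
    rw [Real.norm_eq_abs, abs_le]
    constructor
    · have := neg_abs_le rmin; have := abs_nonneg rmax; linarith
    · have := le_abs_self rmax; have := abs_nonneg rmin; linarith
  have hrmaxmin : 0 ≤ rmax - rmin := by
    rcases hrange 0 with ⟨h1, h2⟩; linarith
  intro x y hxy
  simp only
  rw [hPR x, hPR y]
  set μx : ℝ := τ * x + (1 - τ) * θ with hμx
  set μy : ℝ := τ * y + (1 - τ) * θ with hμy
  have hμxy : μy - μx = τ * (y - x) := by rw [hμx, hμy]; ring
  have hδ : 0 ≤ μy - μx := by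
    rw [hμxy]; exact mul_nonneg hτ0.le (sub_nonneg.2 hxy)
  set m : ℝ := (μx + μy) / 2 with hm
  have hGx := hgint μx
  have hGy := hgint μy
  have hdiff : Integrable (fun v => g (v - μx) - g (v - μy)) := hGx.sub hGy
  have hF : Integrable (fun v => (r v - rmin) * (g (v - μx) - g (v - μy))) := by
    refine hdiff.bdd_mul (hmeas.sub measurable_const).aestronglyMeasurable
      (c := rmax - rmin) (Filter.Eventually.of_forall fun v => ?_)
    rcases hrange v with ⟨h1, h2⟩
    rw [Real.norm_eq_abs, abs_le]
    exact ⟨by linarith, by linarith⟩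
  have key : (∫ v, r v * g (v - μx)) - (∫ v, r v * g (v - μy))
      ≤ (rmax - rmin) * ((μy - μx) * C) := by
    have hsub : (∫ v, r v * g (v - μx)) - (∫ v, r v * g (v - μy))
        = ∫ v, (r v - rmin) * (g (v - μx) - g (v - μy)) := by
      have h0 : (∫ v, g (v - μx)) = ∫ v, g (v - μy) := by
        rw [integral_sub_right_eq_self g μx, integral_sub_right_eq_self g μy]
      have hfe : (fun v => (r v - rmin) * (g (v - μx) - g (v - μy)))
          = fun v => (r v * g (v - μx) - r v * g (v - μy))
              - rmin * (g (v - μx) - g (v - μy)) := by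
        funext v; ring
      have hI1 : Integrable (fun v => r v * g (v - μx) - r v * g (v - μy)) :=
        (hrint μx).sub (hrint μy)
      have hI2 : Integrable (fun v => rmin * (g (v - μx) - g (v - μy))) :=
        hdiff.const_mul rmin
      rw [hfe, integral_sub hI1 hI2, integral_const_mul, integral_sub hGx hGy, h0, sub_self,
        mul_zero, sub_zero, integral_sub (hrint μx) (hrint μy)]
    rw [hsub, ← intervalIntegral.integral_Iic_add_Ioi (b := m) hF.integrableOn hF.integrableOn]
    have h2 : ∫ v in Ioi m, (r v - rmin) * (g (v - μx) - g (v - μy)) ≤ 0 := by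
      apply setIntegral_nonpos measurableSet_Ioi
      intro v hv
      have hvm : m < v := hv
      have hgxy : g (v - μx) ≤ g (v - μy) := by
        apply hganti
        rw [hm] at hvm
        nlinarith
      have h1 := sub_nonneg.2 (hrange v).1
      exact mul_nonpos_of_nonneg_of_nonpos h1 (sub_nonpos.2 hgxy)
    have h1 : ∫ v in Iic m, (r v - rmin) * (g (v - μx) - g (v - μy))
        ≤ (rmax - rmin) * ((μy - μx) * C) := by
      have hmono : ∫ v in Iic m, (r v - rmin) * (g (v - μx) - g (v - μy))
          ≤ ∫ v in Iic m, (rmax - rmin) * (g (v - μx) - g (v - μy)) := by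
        apply setIntegral_mono_on hF.integrableOn (hdiff.const_mul _).integrableOn
          measurableSet_Iic
        intro v hv
        have hvm : v ≤ m := hv
        have hgxy : g (v - μy) ≤ g (v - μx) := by
          apply hganti
          rw [hm] at hvm
          nlinarith
        rcases hrange v with ⟨ha, hb⟩
        nlinarith [sub_nonneg.2 hgxy]
      refine hmono.trans ?_
      rw [integral_const_mul]
      refine mul_le_mul_of_nonneg_left ?_ hrmaxmin
      rw [integral_sub hGx.integrableOn hGy.integrableOn,
        shift_setIntegral g μx m, shift_setIntegral g μy m]
      have hmx : m - μx = (μy - μx) / 2 := by rw [hm]; ring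
      have hmy : m - μy = -((μy - μx) / 2) := by rw [hm]; ring
      rw [hmx, hmy,
        intervalIntegral.integral_Iic_sub_Iic hgI.integrableOn hgI.integrableOn]
      have hb : ∫ t in (-((μy - μx) / 2))..((μy - μx) / 2), g t
          ≤ ∫ t in (-((μy - μx) / 2))..((μy - μx) / 2), C := by
        apply intervalIntegral.integral_mono_on (by linarith)
          hgI.intervalIntegrable intervalIntegrable_const
        intro t _
        exact hgle t
      refine hb.trans ?_
      rw [intervalIntegral.integral_const, smul_eq_mul]
      have : (μy - μx) / 2 - -((μy - μx) / 2) = μy - μx := by ring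
      rw [this]
    linarith
  have hfin : (rmax - rmin) * ((μy - μx) * C) ≤ y - x := by
    have hδC : 0 ≤ (μy - μx) * C := mul_nonneg hδ hC0
    have step1 : (rmax - rmin) * ((μy - μx) * C)
        ≤ (Real.sqrt (2 * Real.pi) * σε * σs / σθ) * ((μy - μx) * C) :=
      mul_le_mul_of_nonneg_right hspread hδC
    refine step1.trans ?_
    refine le_of_eq ?_
    rw [hμxy, hC, hsdef, hτ]
    have hS0 : (0:ℝ) < Real.sqrt (2 * Real.pi) := Real.sqrt_pos.2 (by positivity)
    exact arith_helper _ _ _ _ _ hS0.ne' hσε.ne' hσθ.ne' hσs0.ne' hσs2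
  linarith [key]
end
end

section
/- Let 0 ≤ a ≤ b ≤ c ≤ d be real numbers with a² + d² = b² + c². Then (Φ(a)/φ(a))·(Φ(d)/φ(d)) ≤ (Φ(b)/φ(b))·(Φ(c)/φ(c)), where φ and Φ are the standard normal pdf and cdf. -/
noncomputable section

open MeasureTheory Real Set Filter

lemma stdPdf_pos (x : ℝ) : 0 < stdPdf x := by
  unfold stdPdf
  have := Real.pi_pos
  positivity

lemma stdPdf_continuous : Continuous stdPdf := by
  unfold stdPdf; fun_prop

lemma stdPdf_integrable : Integrable stdPdf := by
  have h := (integrable_exp_neg_mul_sq (b := 1/2) (by norm_num)).const_mul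
    (Real.sqrt (2 * Real.pi))⁻¹
  refine h.congr (Filter.Eventually.of_forall fun x => ?_)
  unfold stdPdf; ring_nf

lemma stdCdf_pos (x : ℝ) : 0 < stdCdf x := by
  unfold stdCdf
  rw [setIntegral_pos_iff_support_of_nonneg_ae
    (Filter.Eventually.of_forall fun t => (stdPdf_pos t).le) stdPdf_integrable.integrableOn]
  have hs : Function.support stdPdf = Set.univ := by
    ext t; simp [Function.mem_support, (stdPdf_pos t).ne']
  rw [hs, Set.univ_inter, Real.volume_Iic]
  exact ENNReal.zero_lt_top

lemma stdCdf_hasDerivAt (x : ℝ) : HasDerivAt stdCdf (stdPdf x) x := by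
  have key : stdCdf = fun y => stdCdf 0 + ∫ t in (0:ℝ)..y, stdPdf t := by
    funext y
    have h := intervalIntegral.integral_Iic_sub_Iic (f := stdPdf) (μ := volume) (a := 0) (b := y)
      stdPdf_integrable.integrableOn stdPdf_integrable.integrableOn
    unfold stdCdf at *
    linarith
  rw [key]
  have hd : HasDerivAt (fun y => ∫ t in (0:ℝ)..y, stdPdf t) (stdPdf x) x :=
    intervalIntegral.integral_hasDerivAt_right
      (stdPdf_integrable.intervalIntegrable)
      stdPdf_continuous.stronglyMeasurable.stronglyMeasurableAtFilter
      stdPdf_continuous.continuousAt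
  simpa using hd.const_add (stdCdf 0)

lemma stdCdf_continuous : Continuous stdCdf :=
  continuous_iff_continuousAt.2 fun x => (stdCdf_hasDerivAt x).continuousAt

lemma stdCdf_mono : Monotone stdCdf := by
  intro x y hxy
  exact setIntegral_mono_set stdPdf_integrable.integrableOn
    (Filter.Eventually.of_forall fun t => (stdPdf_pos t).le)
    (HasSubset.Subset.eventuallyLE (Set.Iic_subset_Iic.2 hxy))

lemma stdPdf_anti_s12 {x y : ℝ} (hx : 0 ≤ x) (hxy : x ≤ y) : stdPdf y ≤ stdPdf x := by
  unfold stdPdf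
  have h2 : x ^ 2 ≤ y ^ 2 := by nlinarith
  have : Real.exp (-(y ^ 2) / 2) ≤ Real.exp (-(x ^ 2) / 2) := by
    apply Real.exp_le_exp.2; linarith
  have hs : (0:ℝ) ≤ (Real.sqrt (2 * Real.pi))⁻¹ := by positivity
  exact mul_le_mul_of_nonneg_left this hs

/-- L(t) = log Φ(√t) + t/2 -/
def Lfun (t : ℝ) : ℝ := Real.log (stdCdf (Real.sqrt t)) + t / 2

def Lder (t : ℝ) : ℝ := stdPdf (Real.sqrt t) / (2 * Real.sqrt t * stdCdf (Real.sqrt t)) + 1 / 2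

lemma Lfun_hasDerivAt {t : ℝ} (ht : 0 < t) : HasDerivAt Lfun (Lder t) t := by
  have hsq : HasDerivAt Real.sqrt (1 / (2 * Real.sqrt t)) t := Real.hasDerivAt_sqrt ht.ne'
  have hc : HasDerivAt (fun s => stdCdf (Real.sqrt s))
      (stdPdf (Real.sqrt t) * (1 / (2 * Real.sqrt t))) t :=
    (stdCdf_hasDerivAt (Real.sqrt t)).comp t hsq
  have hlog : HasDerivAt (fun s => Real.log (stdCdf (Real.sqrt s)))
      (stdPdf (Real.sqrt t) * (1 / (2 * Real.sqrt t)) / stdCdf (Real.sqrt t)) t :=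
    hc.log (stdCdf_pos _).ne'
  have hhalf : HasDerivAt (fun s : ℝ => s / 2) (1 / 2) t := by
    simpa using (hasDerivAt_id t).div_const 2
  have := hlog.add hhalf
  refine this.congr_deriv ?_
  unfold Lder
  have hst : (0:ℝ) < Real.sqrt t := Real.sqrt_pos.2 ht
  field_simp

lemma Lder_antitoneOn : AntitoneOn Lder (Set.Ioi 0) := by
  intro s hs t ht hst
  unfold Lder
  have hss : (0:ℝ) < Real.sqrt s := Real.sqrt_pos.2 hs
  have hts : Real.sqrt s ≤ Real.sqrt t := Real.sqrt_le_sqrt hst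
  have h1 : stdPdf (Real.sqrt t) ≤ stdPdf (Real.sqrt s) := stdPdf_anti_s12 hss.le hts
  have h2 : 2 * Real.sqrt s * stdCdf (Real.sqrt s) ≤ 2 * Real.sqrt t * stdCdf (Real.sqrt t) := by
    have := stdCdf_mono hts
    have := (stdCdf_pos (Real.sqrt s)).le
    nlinarith
  have h3 : 0 < 2 * Real.sqrt s * stdCdf (Real.sqrt s) := by
    have := stdCdf_pos (Real.sqrt s); positivity
  gcongr
  exact (stdPdf_pos _).le

lemma Lfun_concave : ConcaveOn ℝ (Set.Ici 0) Lfun := by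
  have hcont : Continuous Lfun := by
    apply Continuous.add
    · exact (stdCdf_continuous.comp Real.continuous_sqrt).log
        fun t => (stdCdf_pos _).ne'
    · fun_prop
  apply AntitoneOn.concaveOn_of_deriv (convex_Ici 0) hcont.continuousOn
  · rw [interior_Ici]
    intro t ht
    exact (Lfun_hasDerivAt ht).differentiableAt.differentiableWithinAt
  · rw [interior_Ici]
    intro s hs t ht hst
    rw [(Lfun_hasDerivAt ht).deriv, (Lfun_hasDerivAt hs).deriv]
    exact Lder_antitoneOn hs ht hst

lemma mills_eq {x : ℝ} (hx : 0 ≤ x) :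
    stdCdf x / stdPdf x = Real.sqrt (2 * Real.pi) * Real.exp (Lfun (x ^ 2)) := by
  unfold Lfun
  rw [Real.sqrt_sq hx, Real.exp_add, Real.exp_log (stdCdf_pos x)]
  rw [div_eq_iff (stdPdf_pos x).ne']
  unfold stdPdf
  have hs : Real.sqrt (2 * Real.pi) ≠ 0 := by
    have := Real.pi_pos; positivity
  rw [show (-x ^ 2 / 2 : ℝ) = -(x ^ 2 / 2) by ring, Real.exp_neg]
  field_simp [Real.exp_ne_zero]

/-- the Mills-ratio product inequality for 0 ≤ a ≤ b ≤ c ≤ d with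
    a² + d² = b² + c². -/
theorem stmt_12 (a b c d : ℝ) (h0 : 0 ≤ a) (hab : a ≤ b) (hbc : b ≤ c) (hcd : c ≤ d)
    (hsum : a ^ 2 + d ^ 2 = b ^ 2 + c ^ 2) :
    (stdCdf a / stdPdf a) * (stdCdf d / stdPdf d) ≤
      (stdCdf b / stdPdf b) * (stdCdf c / stdPdf c) := by
  have hb0 : 0 ≤ b := h0.trans hab
  have hc0 : 0 ≤ c := hb0.trans hbc
  have hd0 : 0 ≤ d := hc0.trans hcd
  have key : Lfun (a ^ 2) + Lfun (d ^ 2) ≤ Lfun (b ^ 2) + Lfun (c ^ 2) := by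
    have had2 : a ^ 2 ≤ d ^ 2 := by nlinarith
    rcases eq_or_lt_of_le had2 with heq | hlt
    · have had : a = d := by nlinarith
      have h1 : a = b := le_antisymm hab (by linarith [hbc.trans hcd])
      have h2 : a = c := le_antisymm (hab.trans hbc) (by linarith)
      rw [← had, ← h1, ← h2]
    · set μ := (d ^ 2 - b ^ 2) / (d ^ 2 - a ^ 2) with hμdef
      have hden : (0:ℝ) < d ^ 2 - a ^ 2 := by linarith
      have hbd : b ≤ d := hbc.trans hcd
      have hab2 : a ^ 2 ≤ b ^ 2 := by nlinarith
      have hbd2 : b ^ 2 ≤ d ^ 2 := by nlinarith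
      have hbd2' : (0:ℝ) ≤ d ^ 2 - b ^ 2 := by nlinarith
      have hμ0 : 0 ≤ μ := div_nonneg hbd2' hden.le
      have hμ1 : μ ≤ 1 := by
        rw [hμdef, div_le_one hden]; linarith
      have hmem_a : a ^ 2 ∈ Set.Ici (0:ℝ) := Set.mem_Ici.2 (by positivity)
      have hmem_d : d ^ 2 ∈ Set.Ici (0:ℝ) := Set.mem_Ici.2 (by positivity)
      have hμmul : μ * (d ^ 2 - a ^ 2) = d ^ 2 - b ^ 2 := div_mul_cancel₀ _ hden.ne'
      have e1 : μ * a ^ 2 + (1 - μ) * d ^ 2 = b ^ 2 := by linear_combination -hμmul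
      have e2 : (1 - μ) * a ^ 2 + μ * d ^ 2 = c ^ 2 := by linear_combination hμmul + hsum
      have h1 : μ • Lfun (a ^ 2) + (1 - μ) • Lfun (d ^ 2) ≤
          Lfun (μ • (a ^ 2) + (1 - μ) • (d ^ 2)) :=
        Lfun_concave.2 hmem_a hmem_d hμ0 (by linarith) (by ring)
      have h2 : (1 - μ) • Lfun (a ^ 2) + μ • Lfun (d ^ 2) ≤
          Lfun ((1 - μ) • (a ^ 2) + μ • (d ^ 2)) :=
        Lfun_concave.2 hmem_a hmem_d (by linarith) hμ0 (by ring)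
      simp only [smul_eq_mul] at h1 h2
      rw [e1] at h1
      rw [e2] at h2
      linarith
  rw [mills_eq h0, mills_eq hb0, mills_eq hc0, mills_eq hd0]
  have hs : (0:ℝ) < Real.sqrt (2 * Real.pi) := by
    have := Real.pi_pos; positivity
  calc Real.sqrt (2 * Real.pi) * Real.exp (Lfun (a ^ 2)) *
        (Real.sqrt (2 * Real.pi) * Real.exp (Lfun (d ^ 2)))
      = Real.sqrt (2 * Real.pi) ^ 2 * Real.exp (Lfun (a ^ 2) + Lfun (d ^ 2)) := by
        rw [Real.exp_add]; ring
    _ ≤ Real.sqrt (2 * Real.pi) ^ 2 * Real.exp (Lfun (b ^ 2) + Lfun (c ^ 2)) := by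
        exact mul_le_mul_of_nonneg_left (Real.exp_le_exp.2 key) (by positivity)
    _ = Real.sqrt (2 * Real.pi) * Real.exp (Lfun (b ^ 2)) *
        (Real.sqrt (2 * Real.pi) * Real.exp (Lfun (c ^ 2))) := by
        rw [Real.exp_add]; ring
end
end
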